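/- arXiv:2101.00636 — 8 statements merged into one kernel-verified Lean document; each statement's English description precedes it below -/
import Mathlib

section
/- For every computably enumerable set A ⊆ ℕ there exists a computably enumerable binary tree T such that for every n ∈ ℕ the set T_ext^{=n} of extendible nodes of T of length n has exactly one element, and the characteristic function of A (the function f : ℕ → Bool with f(n) = true iff n ∈ A) is a path of T; consequently this characteristic function is the unique path of T. -/
/-
Fix a primitive recursive enumeration `E s` of `A` by stages. A string `σ` enters the tree when
its `1`s are all enumerated at some stage, while its `0`s are only checked against the stage
`|σ|`: a `0` placed on an element of `A` is killed once the string grows past the stage at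
which that element appears. Hence the initial segments of the characteristic function of `A`
all lie in the tree, and they are its only extendible nodes. Since a `1` needs an existential
witness, the tree is c.e. but in general not computable.
-/

/-- A binary tree: a set of binary strings closed under taking prefixes. -/
def IsBinTree (T : Set (List Bool)) : Prop :=
  ∀ σ τ : List Bool, σ <+: τ → τ ∈ T → σ ∈ T

/-- `f : ℕ → Bool` is a path of `T`: every initial segment `[f 0, …, f (n-1)]` is in `T`. -/
def IsPath (T : Set (List Bool)) (f : ℕ → Bool) : Prop :=
  ∀ n : ℕ, (List.ofFn fun i : Fin n => f i) ∈ T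

/-- `σ` is an extendible node of `T`: `σ ∈ T` and `σ` has extensions in `T` of every
greater length. -/
def Extendible (T : Set (List Bool)) (σ : List Bool) : Prop :=
  σ ∈ T ∧ ∀ n : ℕ, ∃ τ ∈ T, σ <+: τ ∧ τ.length = σ.length + n

/-- `T_ext^{=n}`: the set of extendible nodes of `T` of length `n`. -/
def extLevel (T : Set (List Bool)) (n : ℕ) : Set (List Bool) :=
  {σ : List Bool | Extendible T σ ∧ σ.length = n}

open Filter
open Nat.Partrec.Code Encodable

section Enumeration

variable {α : Type*} [Primcodable α]

theorem PrimrecRel.rePred_exists {R : α → ℕ → Prop} (hR : PrimrecRel R) :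
    REPred fun a => ∃ n, R a n := by
  classical
  refine (Partrec.rfind (p := fun a n => Part.some (decide (R a n)))
    hR.decide.to_comp.partrec₂).dom_re.of_eq fun a => ?_
  refine Nat.rfind_dom.trans ?_
  simp

theorem REPred.exists_monotone_primrecRel {p : α → Prop} (hp : REPred p) :
    ∃ E : ℕ → α → Prop, PrimrecRel E ∧ Monotone E ∧ ∀ a, p a ↔ ∃ s, E s a := by
  obtain ⟨c, hc⟩ := exists_code.1 hp
  refine ⟨fun s a => (evaln s c (encode a)).isSome, ?_, ?_, fun a => ?_⟩
  · exact Primrec.eq.comp (Primrec.option_isSome.comp (primrec_evaln.comp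
      ((Primrec.fst.pair (Primrec.const c)).pair (Primrec.encode.comp Primrec.snd))))
      (Primrec.const true)
  · intro s t hst a h
    obtain ⟨x, hx⟩ := Option.isSome_iff_exists.1 h
    exact Option.isSome_iff_exists.2 ⟨x, evaln_mono hst hx⟩
  · have : p a ↔ (eval c (encode a)).Dom := by simp [hc, encodek, Part.dom_iff_mem]
    simp only [this, Part.dom_iff_mem, evaln_complete, Option.isSome_iff_exists, Option.mem_def]
    exact exists_comm

end Enumeration

def initSeg (f : ℕ → Bool) (n : ℕ) : List Bool :=
  List.ofFn fun i : Fin n => f i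

@[simp]
theorem length_initSeg (f : ℕ → Bool) (n : ℕ) : (initSeg f n).length = n :=
  List.length_ofFn

@[simp]
theorem getElem_initSeg (f : ℕ → Bool) {n i : ℕ} (hi : i < (initSeg f n).length) :
    (initSeg f n)[i] = f i :=
  List.getElem_ofFn ..

theorem initSeg_prefix_initSeg_add (f : ℕ → Bool) (n m : ℕ) :
    initSeg f n <+: initSeg f (n + m) := by
  rw [initSeg, initSeg, List.ofFn_add]
  exact List.prefix_append _ _

section Paths

variable {T : Set (List Bool)} {f g : ℕ → Bool}

theorem IsPath.extendible (hf : IsPath T f) (n : ℕ) : Extendible T (initSeg f n) :=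
  ⟨hf n, fun m => ⟨initSeg f (n + m), hf _, initSeg_prefix_initSeg_add f n m, by simp⟩⟩

theorem IsPath.existsUnique_extLevel (hf : IsPath T f)
    (hT : ∀ σ, Extendible T σ → σ = initSeg f σ.length) (n : ℕ) :
    ∃! σ, σ ∈ extLevel T n :=
  ⟨initSeg f n, ⟨hf.extendible n, length_initSeg f n⟩, fun σ ⟨hσ, hlen⟩ => hlen ▸ hT σ hσ⟩

theorem IsPath.eq_of_forall_extendible (hg : IsPath T g)
    (hT : ∀ σ, Extendible T σ → σ = initSeg f σ.length) : g = f := by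
  funext n
  have h := hT _ (hg.extendible (n + 1))
  rw [length_initSeg, initSeg, initSeg, List.ofFn_inj] at h
  exact congrFun h (Fin.last n)

end Paths

def stageTree (E : ℕ → ℕ → Prop) : Set (List Bool) :=
  {σ | ∃ s, ∀ i (hi : i < σ.length), (σ[i] = true → E s i) ∧ (σ[i] = false → ¬E σ.length i)}

section StageTree

variable {E : ℕ → ℕ → Prop} {f : ℕ → Bool}

theorem isBinTree_stageTree (hE : Monotone E) : IsBinTree (stageTree E) := by
  rintro σ τ hστ ⟨s, hs⟩
  refine ⟨s, fun i hi => ?_⟩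
  obtain ⟨htrue, hfalse⟩ := hs i (hi.trans_le hστ.length_le)
  rw [← hστ.getElem hi] at htrue hfalse
  exact ⟨htrue, fun hb hEi => hfalse hb (hE hστ.length_le i hEi)⟩

theorem isPath_stageTree (hE : Monotone E) (hf : ∀ i, f i = true ↔ ∃ s, E s i) :
    IsPath (stageTree E) f := by
  intro n
  have : ∀ᶠ s in atTop, ∀ i ∈ Finset.range n, f i = true → E s i := by
    refine (eventually_all_finset _).2 fun i _ => ?_
    cases hfi : f i
    · exact .of_forall fun _ h => Bool.false_ne_true h |>.elim
    · obtain ⟨t, ht⟩ := (hf i).1 hfi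
      exact eventually_atTop.2 ⟨t, fun s hts _ => hE hts i ht⟩
  obtain ⟨s, hs⟩ := this.exists
  refine ⟨s, fun i hi => ?_⟩
  simp only [List.length_ofFn] at hi
  simp only [List.getElem_ofFn, List.length_ofFn]
  exact ⟨hs i (Finset.mem_range.2 hi), fun hfi hEi => by simp [(hf i).2 ⟨_, hEi⟩] at hfi⟩

theorem eq_initSeg_of_extendible_stageTree (hE : Monotone E)
    (hf : ∀ i, f i = true ↔ ∃ s, E s i) {σ : List Bool} (hσ : Extendible (stageTree E) σ) :
    σ = initSeg f σ.length := by
  obtain ⟨⟨s, hs⟩, hext⟩ := hσ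
  refine List.ext_getElem (by simp) fun i hi _ => ?_
  rw [getElem_initSeg]
  cases hb : σ[i]
  · refine (Bool.eq_false_iff.2 fun hfi => ?_).symm
    obtain ⟨t, ht⟩ := (hf i).1 hfi
    obtain ⟨τ, ⟨s', hs'⟩, hστ, hlen⟩ := hext t
    have := (hs' i (hi.trans_le hστ.length_le)).2 (by rw [← hστ.getElem hi, hb])
    exact this (hE (by omega) i ht)
  · exact ((hf i).2 ⟨s, (hs i hi).1 hb⟩).symm

open Primrec in
theorem rePred_mem_stageTree (hE : PrimrecRel E) : REPred (· ∈ stageTree E) := by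
  have hbit : Primrec fun q : ℕ × List Bool × ℕ => q.2.1.getD q.1 false :=
    (list_getD false).comp (fst.comp snd) fst
  have hbit_ok : PrimrecRel fun i (q : List Bool × ℕ) =>
      (q.1.getD i false = false ∨ E q.2 i) ∧ (q.1.getD i false = true ∨ ¬E q.1.length i) :=
    ((Primrec.eq.comp hbit (const false)).or (hE.comp (snd.comp snd) fst)).and
      ((Primrec.eq.comp hbit (const true)).or
        (hE.comp (list_length.comp (fst.comp snd)) fst).not)
  have hall : PrimrecRel fun (σ : List Bool) (s : ℕ) => ∀ i ∈ List.range σ.length,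
      (σ.getD i false = false ∨ E s i) ∧ (σ.getD i false = true ∨ ¬E σ.length i) :=
    hbit_ok.forall_mem_list.comp (list_range.comp (list_length.comp fst)) Primrec.id
  refine hall.rePred_exists.of_eq fun σ => exists_congr fun s => ?_
  simp only [List.mem_range]
  refine forall₂_congr fun i hi => ?_
  rw [List.getD_eq_getElem _ _ hi]
  cases σ[i] <;> simp

end StageTree

/-- For every c.e. set `A ⊆ ℕ` there is a c.e. binary tree `T` such that for every `n`
the set of extendible nodes of length `n` has exactly one element, and the characteristic
function of `A` is a path of `T`; consequently it is the unique path of `T`. -/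
theorem stmt0 (A : Set ℕ) (hA : REPred (· ∈ A)) :
    ∃ T : Set (List Bool), IsBinTree T ∧ REPred (· ∈ T) ∧
      (∀ n : ℕ, ∃! σ : List Bool, σ ∈ extLevel T n) ∧
      ∀ f : ℕ → Bool, (∀ n : ℕ, f n = true ↔ n ∈ A) →
        IsPath T f ∧ ∀ g : ℕ → Bool, IsPath T g → g = f := by
  classical
  obtain ⟨E, hE_primrec, hE_mono, hA_E⟩ := hA.exists_monotone_primrecRel
  have hchar : ∀ f : ℕ → Bool, (∀ n, f n = true ↔ n ∈ A) →
      IsPath (stageTree E) f ∧ ∀ σ, Extendible (stageTree E) σ → σ = initSeg f σ.length := by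
    intro f hf
    have hfE : ∀ n, f n = true ↔ ∃ s, E s n := fun n => (hf n).trans (hA_E n)
    exact ⟨isPath_stageTree hE_mono hfE, fun σ => eq_initSeg_of_extendible_stageTree hE_mono hfE⟩
  obtain ⟨hχ_path, hχ_ext⟩ := hchar (fun n => decide (n ∈ A)) (by simp)
  refine ⟨stageTree E, isBinTree_stageTree hE_mono, rePred_mem_stageTree hE_primrec,
    hχ_path.existsUnique_extLevel hχ_ext, fun f hf => ?_⟩
  obtain ⟨hf_path, hf_ext⟩ := hchar f hf
  exact ⟨hf_path, fun g hg => hg.eq_of_forall_extendible hf_ext⟩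
end

section
/- There exists a computably enumerable infinite binary tree T such that for every n ∈ ℕ the set T_ext^{=n} of extendible nodes of length n has exactly one element, T has exactly one path, and this path is not computable. -/
/-! The characteristic function `halts` of the halting set is the pointwise limit of its
primitive recursive stage-`s` approximations `haltsWithin s`. Let `T` consist of the strings `τ`
that agree with `haltsWithin s` on `[0, |τ|)` for some stage `s ≥ |τ|`; it is c.e. because the
approximations are primitive recursive. A node of length `n` with an extension in `T` of length
beyond the stage at which the first `n` bits have settled must be `halts ↾ n`, so this is the only
extendible node of length `n` and `halts` is the only path. By the unsolvability of the halting
problem, `halts` is not computable. -/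

open Filter
open Nat.Partrec (Code)
open Nat.Partrec.Code

theorem List.ofFn_eq_map_range {α : Type*} (g : ℕ → α) (n : ℕ) :
    List.ofFn (fun i : Fin n => g i) = (List.range n).map g := by
  apply List.ext_getElem <;> simp

theorem List.map_range_prefix_map_range {α : Type*} (g : ℕ → α) {m n : ℕ} (h : m ≤ n) :
    (List.range m).map g <+: (List.range n).map g := by
  have := (List.take_prefix m (List.range n)).map g
  rwa [List.take_range, min_eq_left h] at this

theorem List.eq_map_range_of_prefix {α : Type*} {σ : List α} {g : ℕ → α} {n : ℕ}
    (h : σ <+: (List.range n).map g) : σ = (List.range σ.length).map g := by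
  have hlen : σ.length ≤ n := by simpa using h.length_le
  rw [List.prefix_iff_eq_take.1 h, ← List.map_take, List.take_range, min_eq_left hlen]
  simp

theorem Computable₂.rePred_exists {α : Type*} [Primcodable α] {q : α → ℕ → Bool}
    (hq : Computable₂ q) : REPred fun a => ∃ s, q a s = true := by
  refine (Partrec.rfind hq.partrec₂).dom_re.of_eq fun a => ?_
  simp [Nat.rfind_dom]

theorem IsPath.map_range_mem_extLevel {T : Set (List Bool)} {g : ℕ → Bool} (hg : IsPath T g)
    (n : ℕ) : (List.range n).map g ∈ extLevel T n := by
  have mem (m : ℕ) : (List.range m).map g ∈ T := List.ofFn_eq_map_range g m ▸ hg m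
  exact ⟨⟨mem n, fun m => ⟨_, mem (n + m), List.map_range_prefix_map_range g (by omega),
    by simp⟩⟩, by simp⟩

/-- The bound `τ.length ≤ s` keeps long nodes from coming from early stages; without it every
`k s` would be a path. -/
def approxTree (k : ℕ → ℕ → Bool) : Set (List Bool) :=
  {τ | ∃ s, τ.length ≤ s ∧ τ = (List.range τ.length).map (k s)}

section approxTree

variable {k : ℕ → ℕ → Bool}

theorem isBinTree_approxTree (k : ℕ → ℕ → Bool) : IsBinTree (approxTree k) := by
  rintro σ τ hστ ⟨s, hs, hτ⟩
  exact ⟨s, hστ.length_le.trans hs, List.eq_map_range_of_prefix (hτ ▸ hστ)⟩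

theorem rePred_approxTree (hk : Primrec₂ k) : REPred (· ∈ approxTree k) := by
  have hq : Primrec₂ fun (τ : List Bool) (s : ℕ) =>
      decide (τ.length ≤ s ∧ τ = (List.range τ.length).map (k s)) :=
    PrimrecPred.decide <| (Primrec.nat_le.comp (Primrec.list_length.comp Primrec.fst)
      Primrec.snd).and <| Primrec.eq.comp Primrec.fst <|
        Primrec.list_map (Primrec.list_range.comp (Primrec.list_length.comp Primrec.fst))
          (hk.comp (Primrec.snd.comp Primrec.fst) Primrec.snd)
  exact hq.to_comp.rePred_exists.of_eq fun τ => by simp [approxTree]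

variable {f : ℕ → Bool} (hf : ∀ n, ∀ᶠ s in atTop, k s n = f n)
include hf

theorem eventually_map_range_eq (n : ℕ) :
    ∀ᶠ s in atTop, (List.range n).map (k s) = (List.range n).map f :=
  ((eventually_all_finset (Finset.range n)).2 fun i _ => hf i).mono fun _ hs =>
    List.map_inj_left.2 fun i hi => hs i (by simpa using hi)

theorem isPath_approxTree : IsPath (approxTree k) f := fun n => by
  obtain ⟨s, hs, hn⟩ := ((eventually_map_range_eq hf n).and (eventually_ge_atTop n)).exists
  exact ⟨s, by simpa using hn, by simpa [List.ofFn_eq_map_range] using hs.symm⟩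

theorem eq_of_mem_extLevel_approxTree {n : ℕ} {σ : List Bool}
    (hσ : σ ∈ extLevel (approxTree k) n) : σ = (List.range n).map f := by
  obtain ⟨⟨-, hext⟩, rfl⟩ := hσ
  obtain ⟨S, hS⟩ := eventually_atTop.1 (eventually_map_range_eq hf σ.length)
  obtain ⟨τ, ⟨s, hs, hτ⟩, hστ, hlen⟩ := hext S
  exact (List.eq_map_range_of_prefix (hτ ▸ hστ)).trans (hS s (by omega))

theorem eq_of_isPath_approxTree {g : ℕ → Bool} (hg : IsPath (approxTree k) g) : g = f := by
  funext i
  have := eq_of_mem_extLevel_approxTree hf (hg.map_range_mem_extLevel (i + 1))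
  exact List.map_inj_left.1 this i (by simp)

end approxTree

def haltsWithin (s n : ℕ) : Bool := (evaln s (Denumerable.ofNat Code n) 0).isSome

open Classical in
noncomputable def halts (n : ℕ) : Bool := decide (eval (Denumerable.ofNat Code n) 0).Dom

theorem primrec₂_haltsWithin : Primrec₂ haltsWithin :=
  Primrec.option_isSome.comp <| primrec_evaln.comp <|
    (Primrec.fst.pair ((Primrec.ofNat Code).comp Primrec.snd)).pair (Primrec.const 0)

theorem eventually_haltsWithin_eq_halts (n : ℕ) : ∀ᶠ s in atTop, haltsWithin s n = halts n := by
  by_cases h : (eval (Denumerable.ofNat Code n) 0).Dom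
  · obtain ⟨s, hs⟩ := evaln_complete.1 (Part.get_mem h)
    filter_upwards [eventually_ge_atTop s] with s' hs'
    simp [haltsWithin, halts, h, Option.isSome_iff_exists.2 ⟨_, evaln_mono hs' hs⟩]
  · refine Eventually.of_forall fun s => ?_
    have : evaln s (Denumerable.ofNat Code n) 0 = none :=
      Option.eq_none_iff_forall_not_mem.2 fun x hx => h (Part.dom_iff_mem.2 ⟨x, evaln_sound hx⟩)
    simp [haltsWithin, halts, h, this]

theorem not_computable_halts : ¬ Computable halts := fun hc =>
  ComputablePred.halting_problem 0 <| ComputablePred.computable_iff.2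
    ⟨_, hc.comp Computable.encode, funext fun c => by simp [halts]⟩

/-- There exists a c.e. infinite binary tree whose sets of extendible nodes of each length
are singletons, which has exactly one path, and whose unique path is not computable. -/
theorem stmt1 :
    ∃ T : Set (List Bool), IsBinTree T ∧ REPred (· ∈ T) ∧
      (∀ n : ℕ, ∃ σ ∈ T, σ.length = n) ∧
      (∀ n : ℕ, ∃! σ : List Bool, σ ∈ extLevel T n) ∧
      ∃ f : ℕ → Bool, IsPath T f ∧ ¬ Computable f ∧
        ∀ g : ℕ → Bool, IsPath T g → g = f := by
  have hlim := eventually_haltsWithin_eq_halts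
  have hpath := isPath_approxTree hlim
  exact ⟨approxTree haltsWithin, isBinTree_approxTree _, rePred_approxTree primrec₂_haltsWithin,
    fun n => ⟨_, (hpath.map_range_mem_extLevel n).1.1, by simp⟩,
    fun n => ⟨_, hpath.map_range_mem_extLevel n, fun _ => eq_of_mem_extLevel_approxTree hlim⟩,
    halts, hpath, not_computable_halts, fun _ => eq_of_isPath_approxTree hlim⟩
end

section
/- Let T be a tree of strings over ℕ that is infinite, and suppose there is b ∈ ℕ such that every prefix-free subset P of T is finite with at most b elements. Then T has a path. -/
/-- A tree of strings over ℕ: a set of finite sequences of naturals closed under prefixes. -/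
def IsTreeN (T : Set (List ℕ)) : Prop :=
  ∀ σ τ : List ℕ, σ <+: τ → τ ∈ T → σ ∈ T

/-- `f : ℕ → ℕ` is a path of `T`: every initial segment `[f 0, …, f (n-1)]` is in `T`. -/
def IsPathN (T : Set (List ℕ)) (f : ℕ → ℕ) : Prop :=
  ∀ n : ℕ, (List.ofFn fun i : Fin n => f i) ∈ T

/-- A set of strings over ℕ is prefix-free if no element is a proper prefix of another. -/
def PrefixFreeN (P : Set (List ℕ)) : Prop :=
  ∀ σ ∈ P, ∀ τ ∈ P, σ <+: τ → σ = τ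

/-!
The one-letter extensions `σ ++ [n]` of a node form a prefix-free set, so `T` is finitely
branching, and Kőnig's lemma applies: a node with infinitely many extensions in `T` has a child
with the same property, since its extensions are the node itself together with the extensions of
its finitely many children; starting from the root and always moving to such a child traces out
a path.
-/

open Set

def extensionsN (T : Set (List ℕ)) (σ : List ℕ) : Set (List ℕ) :=
  {τ | τ ∈ T ∧ σ <+: τ}

def childrenN (T : Set (List ℕ)) (σ : List ℕ) : Set ℕ :=
  {n | σ ++ [n] ∈ T}

section Konig

variable {T : Set (List ℕ)}

theorem extensionsN_nil (T : Set (List ℕ)) : extensionsN T [] = T := by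
  ext τ
  simp [extensionsN]

theorem IsTreeN.mem_of_extensionsN_nonempty (hT : IsTreeN T) {σ : List ℕ}
    (h : (extensionsN T σ).Nonempty) : σ ∈ T :=
  let ⟨τ, hτT, hστ⟩ := h
  hT σ τ hστ hτT

theorem finite_childrenN (hfin : ∀ P ⊆ T, PrefixFreeN P → P.Finite) (σ : List ℕ) :
    (childrenN T σ).Finite := by
  have hprefixFree : PrefixFreeN ((fun n => σ ++ [n]) '' childrenN T σ) := by
    rintro _ ⟨m, -, rfl⟩ _ ⟨n, -, rfl⟩ hmn
    exact hmn.eq_of_length (by simp)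
  refine Finite.of_finite_image (hfin _ ?_ hprefixFree) ?_
  · rintro _ ⟨n, hn, rfl⟩
    exact hn
  · intro m _ n _ hmn
    simpa using hmn

theorem IsTreeN.extensionsN_subset (hT : IsTreeN T) (σ : List ℕ) :
    extensionsN T σ ⊆ insert σ (⋃ n ∈ childrenN T σ, extensionsN T (σ ++ [n])) := by
  rintro τ ⟨hτT, ρ, rfl⟩
  rcases ρ with _ | ⟨n, ρ⟩
  · simp
  · have hn : n ∈ childrenN T σ := hT _ _ ⟨ρ, by simp⟩ hτT
    exact mem_insert_of_mem _ (mem_biUnion hn ⟨hτT, ρ, by simp⟩)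

theorem IsTreeN.exists_extensionsN_infinite_child (hT : IsTreeN T) {σ : List ℕ}
    (hσ : (childrenN T σ).Finite) (h : (extensionsN T σ).Infinite) :
    ∃ n, (extensionsN T (σ ++ [n])).Infinite := by
  by_contra! hfin
  exact h (((hσ.biUnion fun n _ => hfin n).insert σ).subset (hT.extensionsN_subset σ))

theorem IsTreeN.exists_path_of_finite_childrenN (hT : IsTreeN T) (hinf : T.Infinite)
    (hbranch : ∀ σ, (childrenN T σ).Finite) : ∃ f : ℕ → ℕ, IsPathN T f := by
  let Node := {σ : List ℕ // (extensionsN T σ).Infinite}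
  have hstep (σ : Node) : ∃ n, (extensionsN T (σ.1 ++ [n])).Infinite :=
    hT.exists_extensionsN_infinite_child (hbranch σ.1) σ.2
  choose next hnext using hstep
  let node : ℕ → Node :=
    Nat.rec ⟨[], by rwa [extensionsN_nil]⟩ fun _ σ => ⟨σ.1 ++ [next σ], hnext σ⟩
  have hnode (n : ℕ) : (List.ofFn fun i : Fin n => next (node i)) = (node n).1 := by
    induction n with
    | zero => rfl
    | succ n ih =>
      rw [List.ofFn_succ', List.concat_eq_append]
      exact congrArg (· ++ [_]) ih
  refine ⟨fun n => next (node n), fun n => ?_⟩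
  rw [hnode n]
  exact hT.mem_of_extensionsN_nonempty (node n).2.nonempty

end Konig

/-- An infinite tree of strings over ℕ all of whose prefix-free subsets are finite with
at most `b` elements has a path. -/
theorem stmt2 (T : Set (List ℕ)) (hT : IsTreeN T) (hinf : T.Infinite) (b : ℕ)
    (hb : ∀ P : Set (List ℕ), P ⊆ T → PrefixFreeN P → P.Finite ∧ P.ncard ≤ b) :
    ∃ f : ℕ → ℕ, IsPathN T f :=
  hT.exists_path_of_finite_childrenN hinf
    (finite_childrenN fun P hPT hP => (hb P hPT hP).1)
end

section
/- Let T be a computable tree of strings over ℕ that is infinite, and suppose there is b ∈ ℕ such that every prefix-free subset of T has at most b elements. Then T has a computable path. -/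
/-!
Each level of `T` is prefix-free, so it has at most `b` nodes, and none is empty since `T` is
infinite. Dead ends are prefix-free as well, hence finitely many; above them every node has a
child, so the level sizes are nondecreasing and increase strictly past a branching node. Being
bounded by `b` they stabilise, so from some level `M` on every node has exactly one child. The
extensions of a node `σ` of length `M` then form a single infinite branch, and the `n`-th entry
of that branch is found by searching `T` for any extension of `σ` longer than `n`.
-/

lemma Nat.exists_forall_ge_eq_of_monotone_of_le {g : ℕ → ℕ} {b : ℕ} (hg : Monotone g)
    (hgb : ∀ n, g n ≤ b) : ∃ K, ∀ n, K ≤ n → g n = g K := by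
  have hbdd : BddAbove (Set.range g) := ⟨b, by rintro _ ⟨n, rfl⟩; exact hgb n⟩
  obtain ⟨K, hK⟩ := Nat.sSup_mem (Set.range_nonempty g) hbdd
  exact ⟨K, fun n hn => le_antisymm (hK ▸ le_csSup hbdd ⟨n, rfl⟩) (hg hn)⟩

def treeLevel (T : Set (List ℕ)) (n : ℕ) : Set (List ℕ) :=
  {τ ∈ T | τ.length = n}

section Levels

variable {T : Set (List ℕ)} {b n : ℕ}

lemma finite_of_prefixFreeN (hb : ∀ F : Finset (List ℕ), ↑F ⊆ T → PrefixFreeN ↑F → F.card ≤ b)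
    {S : Set (List ℕ)} (hST : S ⊆ T) (hS : PrefixFreeN S) : S.Finite := by
  by_contra hinf
  obtain ⟨F, hFS, hcard⟩ := Set.Infinite.exists_subset_card_eq hinf (b + 1)
  have := hb F (hFS.trans hST) fun σ hσ τ hτ => hS σ (hFS hσ) τ (hFS hτ)
  omega

lemma ncard_le_of_prefixFreeN (hb : ∀ F : Finset (List ℕ), ↑F ⊆ T → PrefixFreeN ↑F → F.card ≤ b)
    {S : Set (List ℕ)} (hST : S ⊆ T) (hS : PrefixFreeN S) : S.ncard ≤ b := by
  have hfin := finite_of_prefixFreeN hb hST hS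
  rw [Set.ncard_eq_toFinset_card S hfin]
  exact hb _ (by simpa using hST) (by simpa using hS)

lemma prefixFreeN_treeLevel : PrefixFreeN (treeLevel T n) :=
  fun _ hσ _ hτ hστ => hστ.eq_of_length (hσ.2.trans hτ.2.symm)

lemma treeLevel_subset : treeLevel T n ⊆ T := fun _ hτ => hτ.1

lemma treeLevel_nonempty (hT : IsTreeN T)
    (hb : ∀ F : Finset (List ℕ), ↑F ⊆ T → PrefixFreeN ↑F → F.card ≤ b) (hinf : T.Infinite)
    (n : ℕ) : (treeLevel T n).Nonempty := by
  by_contra hempty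
  have hshort : ∀ τ ∈ T, τ.length < n := fun τ hτ => by
    by_contra hlen
    exact hempty ⟨τ.take n, hT _ τ (List.take_prefix n τ) hτ, by simp_all⟩
  have hfin (k : ℕ) : (treeLevel T k).Finite :=
    finite_of_prefixFreeN hb treeLevel_subset prefixFreeN_treeLevel
  exact hinf <| ((Set.finite_lt_nat n).biUnion fun k _ => hfin k).subset
    fun τ hτ => Set.mem_biUnion (hshort τ hτ) ⟨hτ, rfl⟩

/-- Dead ends form a prefix-free set, hence a finite one. -/
lemma exists_forall_length_ge_exists_child (hT : IsTreeN T)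
    (hb : ∀ F : Finset (List ℕ), ↑F ⊆ T → PrefixFreeN ↑F → F.card ≤ b) :
    ∃ D, ∀ τ ∈ T, D ≤ τ.length → ∃ a, τ ++ [a] ∈ T := by
  let dead : Set (List ℕ) := {τ ∈ T | ∀ a, τ ++ [a] ∉ T}
  have hdead : PrefixFreeN dead := by
    rintro σ hσ _ hτ ⟨_ | ⟨a, t⟩, rfl⟩
    · simp
    · exact absurd (hT (σ ++ [a]) _ ⟨t, by simp⟩ hτ.1) (hσ.2 a)
  obtain ⟨D, hD⟩ := ((finite_of_prefixFreeN hb (fun τ hτ => hτ.1) hdead).image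
    List.length).bddAbove
  refine ⟨D + 1, fun τ hτ hlen => ?_⟩
  by_contra! hnone
  have := hD ⟨τ, ⟨hτ, hnone⟩, rfl⟩
  omega

lemma image_take_treeLevel_succ (hT : IsTreeN T)
    (hchild : ∀ τ ∈ treeLevel T n, ∃ a, τ ++ [a] ∈ T) :
    List.take n '' treeLevel T (n + 1) = treeLevel T n := by
  apply Set.Subset.antisymm
  · rintro _ ⟨τ, hτ, rfl⟩
    exact ⟨hT _ τ (List.take_prefix n τ) hτ.1, by simp [hτ.2]⟩
  · intro τ hτ
    obtain ⟨a, ha⟩ := hchild τ hτ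
    exact ⟨τ ++ [a], ⟨ha, by simp [hτ.2]⟩, List.take_left' hτ.2⟩

lemma ncard_treeLevel_le_succ (hT : IsTreeN T) (hfin : (treeLevel T (n + 1)).Finite)
    (hchild : ∀ τ ∈ treeLevel T n, ∃ a, τ ++ [a] ∈ T) :
    (treeLevel T n).ncard ≤ (treeLevel T (n + 1)).ncard :=
  image_take_treeLevel_succ hT hchild ▸ Set.ncard_image_le hfin

/-- Equal level sizes make `List.take n` injective on the next level. -/
lemma existsUnique_child_of_ncard_treeLevel_eq (hT : IsTreeN T)
    (hfin : (treeLevel T (n + 1)).Finite) (hchild : ∀ τ ∈ treeLevel T n, ∃ a, τ ++ [a] ∈ T)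
    (heq : (treeLevel T n).ncard = (treeLevel T (n + 1)).ncard) :
    ∀ τ ∈ treeLevel T n, ∃! a, τ ++ [a] ∈ T := by
  have hinj : Set.InjOn (List.take n) (treeLevel T (n + 1)) :=
    (Set.ncard_image_iff hfin).mp (by rw [image_take_treeLevel_succ hT hchild, heq])
  intro τ hτ
  obtain ⟨a, ha⟩ := hchild τ hτ
  refine ⟨a, ha, fun a' ha' => ?_⟩
  have hlevel : ∀ c, τ ++ [c] ∈ T → τ ++ [c] ∈ treeLevel T (n + 1) :=
    fun c hc => ⟨hc, by simp [hτ.2]⟩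
  simpa using hinj (hlevel a' ha') (hlevel a ha)
    (by rw [List.take_left' hτ.2, List.take_left' hτ.2])

lemma exists_forall_length_ge_existsUnique_child (hT : IsTreeN T)
    (hb : ∀ F : Finset (List ℕ), ↑F ⊆ T → PrefixFreeN ↑F → F.card ≤ b) :
    ∃ M, ∀ τ ∈ T, M ≤ τ.length → ∃! a, τ ++ [a] ∈ T := by
  obtain ⟨D, hD⟩ := exists_forall_length_ge_exists_child hT hb
  have hfin (n : ℕ) : (treeLevel T n).Finite :=
    finite_of_prefixFreeN hb treeLevel_subset prefixFreeN_treeLevel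
  have hchild (k : ℕ) : ∀ τ ∈ treeLevel T (D + k), ∃ a, τ ++ [a] ∈ T :=
    fun τ hτ => hD τ hτ.1 (by rw [hτ.2]; omega)
  obtain ⟨K, hK⟩ := Nat.exists_forall_ge_eq_of_monotone_of_le
    (g := fun k => (treeLevel T (D + k)).ncard)
    (monotone_nat_of_le_succ fun k => ncard_treeLevel_le_succ hT (hfin _) (hchild k))
    (fun _ => ncard_le_of_prefixFreeN hb treeLevel_subset prefixFreeN_treeLevel)
  refine ⟨D + K, fun τ hτ hlen => ?_⟩
  obtain ⟨k, hk⟩ : ∃ k, τ.length = D + k := ⟨τ.length - D, by omega⟩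
  exact existsUnique_child_of_ncard_treeLevel_eq hT (hfin _) (hchild k)
    ((hK k (by omega)).trans (hK (k + 1) (by omega)).symm) τ ⟨hτ, hk⟩

end Levels

section Extensions

variable {T : Set (List ℕ)} {σ : List ℕ}

lemma exists_mem_isPrefix_length_eq (hσ : σ ∈ T)
    (hchild : ∀ τ ∈ T, σ <+: τ → ∃ a, τ ++ [a] ∈ T) (k : ℕ) :
    ∃ τ ∈ T, σ <+: τ ∧ τ.length = σ.length + k := by
  induction k with
  | zero => exact ⟨σ, hσ, List.prefix_refl σ, rfl⟩
  | succ k ih =>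
    obtain ⟨τ, hτ, hστ, hlen⟩ := ih
    obtain ⟨a, ha⟩ := hchild τ hτ hστ
    exact ⟨τ ++ [a], ha, hστ.trans (List.prefix_append τ [a]), by simp [hlen, Nat.add_assoc]⟩

lemma eq_of_isPrefix_of_length_eq (hT : IsTreeN T)
    (huniq : ∀ τ ∈ T, σ <+: τ → ∃! a, τ ++ [a] ∈ T) {τ τ' : List ℕ} (hτ : τ ∈ T)
    (hτ' : τ' ∈ T) (hστ : σ <+: τ) (hστ' : σ <+: τ') (hlen : τ.length = τ'.length) :
    τ = τ' := by
  obtain ⟨k, hk⟩ : ∃ k, τ.length = σ.length + k := ⟨τ.length - σ.length, by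
    have := hστ.length_le; omega⟩
  induction k generalizing τ τ' with
  | zero => exact (hστ.eq_of_length hk.symm).symm.trans (hστ'.eq_of_length (by omega))
  | succ k ih =>
    have hsplit : ∀ ρ ∈ T, σ <+: ρ → ρ.length = σ.length + (k + 1) →
        ∃ ρ₀ a, ρ = ρ₀ ++ [a] ∧ ρ₀ ∈ T ∧ σ <+: ρ₀ ∧ ρ₀.length = σ.length + k := by
      intro ρ hρ hσρ hρlen
      rcases List.eq_nil_or_concat' ρ with rfl | ⟨ρ₀, a, rfl⟩
      · simp at hρlen
      · simp only [List.length_append, List.length_singleton] at hρlen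
        exact ⟨ρ₀, a, rfl, hT _ _ (List.prefix_append ρ₀ [a]) hρ,
          List.prefix_of_prefix_length_le hσρ (List.prefix_append ρ₀ [a]) (by omega), by omega⟩
    obtain ⟨ρ, a, rfl, hρ, hσρ, hρlen⟩ := hsplit τ hτ hστ hk
    obtain ⟨ρ', a', rfl, hρ', hσρ', hρlen'⟩ := hsplit τ' hτ' hστ' (by omega)
    obtain rfl : ρ = ρ' := ih hρ hρ' hσρ hσρ' (by omega) hρlen
    obtain ⟨_, _, hone⟩ := huniq ρ hρ hσρ
    rw [hone a hτ, hone a' hτ']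

lemma isPrefix_or_isPrefix_of_existsUnique_child (hT : IsTreeN T)
    (huniq : ∀ τ ∈ T, σ <+: τ → ∃! a, τ ++ [a] ∈ T) {τ τ' : List ℕ} (hτ : τ ∈ T)
    (hτ' : τ' ∈ T) (hστ : σ <+: τ) (hστ' : σ <+: τ') : τ <+: τ' ∨ τ' <+: τ := by
  have hprefix : ∀ {τ τ'}, τ ∈ T → τ' ∈ T → σ <+: τ → σ <+: τ' → τ.length ≤ τ'.length →
      τ <+: τ' := by
    intro τ τ' hτ hτ' hστ hστ' hle
    have hσ_take : σ <+: τ'.take τ.length :=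
      List.prefix_take_iff.mpr ⟨hστ', hστ.length_le⟩
    rw [eq_of_isPrefix_of_length_eq hT huniq hτ (hT _ _ (List.take_prefix _ τ') hτ') hστ
      hσ_take (by simp [hle])]
    exact List.take_prefix _ τ'
  rcases le_total τ.length τ'.length with hle | hle
  · exact .inl (hprefix hτ hτ' hστ hστ' hle)
  · exact .inr (hprefix hτ' hτ hστ' hστ hle)

lemma exists_isPathN_of_isPrefix_or_isPrefix (hT : IsTreeN T)
    (hchain : ∀ τ ∈ T, ∀ τ' ∈ T, σ <+: τ → σ <+: τ' → τ <+: τ' ∨ τ' <+: τ)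
    (hlong : ∀ n, ∃ τ ∈ T, σ <+: τ ∧ n < τ.length) :
    ∃ f : ℕ → ℕ, IsPathN T f ∧
      ∀ τ ∈ T, σ <+: τ → ∀ i (hi : i < τ.length), τ[i] = f i := by
  choose τs hτsT hστs hlen using hlong
  let f : ℕ → ℕ := fun i => (τs i)[i]'(hlen i)
  have hentry : ∀ τ ∈ T, σ <+: τ → ∀ i (hi : i < τ.length), τ[i] = f i := by
    intro τ hτ hστ i hi
    rcases hchain τ hτ (τs i) (hτsT i) hστ (hστs i) with h | h
    · exact h.getElem hi
    · exact (h.getElem (hlen i)).symm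
  refine ⟨f, fun n => ?_, hentry⟩
  have hofFn : List.ofFn (fun i : Fin n => f i) = (τs n).take n :=
    List.ext_getElem (by simp [Nat.min_eq_left (hlen n).le]) fun i _ h => by
      simp [hentry (τs n) (hτsT n) (hστs n) i (by simp only [List.length_take] at h; omega)]
  rw [hofFn]
  exact hT _ _ (List.take_prefix n (τs n)) (hτsT n)

end Extensions

/-- Search for any extension of `σ` in `T` that is longer than `n` and read off its `n`-th entry;
all such extensions agree with `f`. -/
lemma computable_of_forall_getElem_eq {T : Set (List ℕ)} (hcomp : ComputablePred (· ∈ T))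
    {σ : List ℕ} {f : ℕ → ℕ} (hlong : ∀ n, ∃ τ ∈ T, σ <+: τ ∧ n < τ.length)
    (hf : ∀ τ ∈ T, σ <+: τ → ∀ i (hi : i < τ.length), τ[i] = f i) : Computable f := by
  obtain ⟨_, hdec⟩ := hcomp
  let F : ℕ → ℕ → Option ℕ := fun n e =>
    (Encodable.decode (α := List ℕ) e).bind fun ρ => bif decide (σ ++ ρ ∈ T) then (σ ++ ρ)[n]?
      else none
  have hF : Computable₂ F := by
    have happ : Computable fun p : (ℕ × ℕ) × List ℕ => σ ++ p.2 :=
      (Primrec.list_append.comp (Primrec.const σ) Primrec.snd).to_comp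
    have hsearch : Computable fun p : (ℕ × ℕ) × List ℕ =>
        bif decide (σ ++ p.2 ∈ T) then (σ ++ p.2)[p.1.1]? else none :=
      (hdec.comp happ).cond (Computable.list_getElem?.comp happ
        (Computable.fst.comp Computable.fst)) (Computable.const none)
    exact (Computable.decode.comp Computable.snd).option_bind hsearch.to₂
  have hsound : ∀ n e a, a ∈ F n e → a = f n := by
    intro n e a ha
    simp only [F, Option.mem_def, Option.bind_eq_some_iff] at ha
    obtain ⟨ρ, -, ha⟩ := ha
    cases hρ : decide (σ ++ ρ ∈ T)
    · simp [hρ] at ha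
    · simp only [hρ, cond_true, List.getElem?_eq_some_iff] at ha
      obtain ⟨hlen, rfl⟩ := ha
      exact hf _ (of_decide_eq_true hρ) (List.prefix_append σ ρ) n hlen
  have hcomplete : ∀ n, ∃ e, f n ∈ F n e := by
    intro n
    obtain ⟨_, hτ, ⟨ρ, rfl⟩, hlen⟩ := hlong n
    refine ⟨Encodable.encode ρ, ?_⟩
    simp [F, hτ, List.getElem?_eq_getElem hlen, hf _ hτ (List.prefix_append σ ρ) n hlen]
  refine (Partrec.rfindOpt hF).of_eq_tot fun n => ?_
  obtain ⟨e, he⟩ := hcomplete n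
  have hdom : (Nat.rfindOpt (F n)).Dom := Nat.rfindOpt_dom.mpr ⟨e, f n, he⟩
  obtain ⟨e', he'⟩ := Nat.rfindOpt_spec (Part.get_mem hdom)
  exact hsound n e' _ he' ▸ Part.get_mem hdom

/-- A computable infinite tree of strings over ℕ all of whose prefix-free subsets have
at most `b` elements has a computable path. -/
theorem stmt4 (T : Set (List ℕ)) (hT : IsTreeN T) (hcomp : ComputablePred (· ∈ T))
    (hinf : T.Infinite) (b : ℕ)
    (hb : ∀ F : Finset (List ℕ), ↑F ⊆ T → PrefixFreeN ↑F → F.card ≤ b) :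
    ∃ f : ℕ → ℕ, Computable f ∧ IsPathN T f := by
  obtain ⟨M, hM⟩ := exists_forall_length_ge_existsUnique_child hT hb
  obtain ⟨σ, hσ, hσlen⟩ := treeLevel_nonempty hT hb hinf M
  have huniq : ∀ τ ∈ T, σ <+: τ → ∃! a, τ ++ [a] ∈ T :=
    fun τ hτ hστ => hM τ hτ (hσlen ▸ hστ.length_le)
  have hlong : ∀ n, ∃ τ ∈ T, σ <+: τ ∧ n < τ.length := fun n => by
    obtain ⟨τ, hτ, hστ, hlen⟩ :=
      exists_mem_isPrefix_length_eq hσ (fun τ hτ hστ => (huniq τ hτ hστ).exists) (n + 1)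
    exact ⟨τ, hτ, hστ, by omega⟩
  obtain ⟨f, hpath, hf⟩ := exists_isPathN_of_isPrefix_or_isPrefix hT
    (fun τ hτ τ' hτ' => isPrefix_or_isPrefix_of_existsUnique_child hT huniq hτ hτ') hlong
  exact ⟨f, computable_of_forall_getElem_eq hcomp hlong hf, hpath⟩
end

section
/- Let T be an infinite binary tree and c ∈ ℕ such that every prefix-free subset of T has at most c elements. Then there exists an extendible node σ ∈ T such that any two elements of T extending σ are comparable under the prefix relation; consequently T has exactly one path extending σ. -/
/-- A set of binary strings is prefix-free if no element is a proper prefix of another. -/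
def PrefixFreeB (P : Set (List Bool)) : Prop :=
  ∀ σ ∈ P, ∀ τ ∈ P, σ <+: τ → σ = τ

/-- The path `f` extends the string `σ`, i.e. `σ` is an initial segment of `f`. -/
def ExtendsPath (σ : List Bool) (f : ℕ → Bool) : Prop :=
  σ = List.ofFn fun i : Fin σ.length => f i

/-
Among the extendible nodes choose `σ` minimising the largest size of a prefix-free set of nodes
above it (a number bounded by `c`). If two nodes `τ₁, τ₂` above `σ` were incomparable, an
extendible `σ'` above `σ` longer than both would be incomparable with one of them, say `τ`; adding
`τ` to a largest prefix-free set above `σ'` would give a larger one above `σ`, contradicting the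
choice of `σ`. Once the nodes above the extendible node `σ` form a chain, they spell out a unique
path.
-/

namespace List

variable {α : Type*}

theorem prefix_of_comparable_of_length_le {l₁ l₂ : List α} (h : l₁ <+: l₂ ∨ l₂ <+: l₁)
    (hl : l₁.length ≤ l₂.length) : l₁ <+: l₂ :=
  h.elim id fun h => (h.eq_of_length (le_antisymm h.length_le hl)) ▸ prefix_refl l₂

theorem ofFn_prefix_ofFn (g : ℕ → α) {m n : ℕ} (h : m ≤ n) :
    (ofFn fun i : Fin m => g i) <+: ofFn fun i : Fin n => g i := by
  rw [prefix_iff_eq_take]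
  apply ext_getElem <;> simp [h]

end List

theorem ExtendsPath.prefix_ofFn {σ : List Bool} {g : ℕ → Bool} (h : ExtendsPath σ g) {n : ℕ}
    (hn : σ.length ≤ n) : σ <+: List.ofFn fun i : Fin n => g i := by
  have := List.ofFn_prefix_ofFn g hn
  rwa [← h] at this

section Extendible

variable {T : Set (List Bool)} {σ : List Bool}

theorem extendible_nil (hinf : ∀ n : ℕ, ∃ σ ∈ T, σ.length = n) : Extendible T [] := by
  refine ⟨?_, fun n => ?_⟩
  · obtain ⟨ρ, hρ, hl⟩ := hinf 0
    rwa [List.length_eq_zero_iff.mp hl] at hρ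
  · obtain ⟨τ, hτ, hl⟩ := hinf n
    exact ⟨τ, hτ, List.nil_prefix, by simpa using hl⟩

theorem extendible_iff_forall_exists_le_length (hT : IsBinTree T) :
    Extendible T σ ↔ ∀ n : ℕ, ∃ τ ∈ T, σ <+: τ ∧ n ≤ τ.length := by
  refine ⟨fun h n => ?_, fun h => ⟨?_, fun n => ?_⟩⟩
  · obtain ⟨τ, hτ, hστ, hl⟩ := h.2 n
    exact ⟨τ, hτ, hστ, by omega⟩
  · obtain ⟨τ, hτ, hστ, -⟩ := h 0
    exact hT σ τ hστ hτ
  · obtain ⟨τ, hτ, hστ, hl⟩ := h (σ.length + n)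
    refine ⟨τ.take (σ.length + n), hT _ τ (List.take_prefix _ _) hτ, ?_, by simp; omega⟩
    exact List.prefix_take_iff.mpr ⟨hστ, by omega⟩

theorem Extendible.exists_child (hT : IsBinTree T) (h : Extendible T σ) :
    ∃ b : Bool, Extendible T (σ ++ [b]) := by
  simp_rw [extendible_iff_forall_exists_le_length hT] at h ⊢
  by_contra! hno
  choose N hN using hno
  obtain ⟨τ, hτ, ⟨δ, rfl⟩, hl⟩ := h (σ.length + 1 + N false + N true)
  obtain ⟨b, δ', rfl⟩ : ∃ b δ', δ = b :: δ' :=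
    List.exists_cons_of_ne_nil (by rintro rfl; simp at hl; omega)
  have := hN b _ hτ ⟨δ', by simp⟩
  cases b <;> omega

theorem Extendible.exists_extension (hT : IsBinTree T) (h : Extendible T σ) (n : ℕ) :
    ∃ ρ, Extendible T ρ ∧ σ <+: ρ ∧ ρ.length = σ.length + n := by
  induction n with
  | zero => exact ⟨σ, h, List.prefix_refl σ, rfl⟩
  | succ n ih =>
    obtain ⟨ρ, hρ, hσρ, hl⟩ := ih
    obtain ⟨b, hb⟩ := hρ.exists_child hT
    exact ⟨ρ ++ [b], hb, hσρ.trans (List.prefix_append ρ [b]), by simp [hl]; omega⟩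

end Extendible

section Width

variable {T : Set (List Bool)} {c : ℕ}

def prefixFreeCardsAbove (T : Set (List Bool)) (σ : List Bool) : Set ℕ :=
  {n | ∃ F : Finset (List Bool), ↑F ⊆ T ∧ PrefixFreeB ↑F ∧ (∀ τ ∈ F, σ <+: τ) ∧ F.card = n}

/-- `sSup` is `0` on an unbounded set of naturals; the lemmas below assume a uniform bound `c`. -/
noncomputable def prefixFreeWidth (T : Set (List Bool)) (σ : List Bool) : ℕ :=
  sSup (prefixFreeCardsAbove T σ)

theorem bddAbove_prefixFreeCardsAbove
    (hc : ∀ F : Finset (List Bool), ↑F ⊆ T → PrefixFreeB ↑F → F.card ≤ c) (σ : List Bool) :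
    BddAbove (prefixFreeCardsAbove T σ) :=
  ⟨c, fun _ ⟨F, hFT, hF, _, hn⟩ => hn ▸ hc F hFT hF⟩

theorem prefixFreeWidth_mem (hc : ∀ F : Finset (List Bool), ↑F ⊆ T → PrefixFreeB ↑F → F.card ≤ c)
    (σ : List Bool) : prefixFreeWidth T σ ∈ prefixFreeCardsAbove T σ :=
  Nat.sSup_mem ⟨0, ∅, by simp [PrefixFreeB]⟩ (bddAbove_prefixFreeCardsAbove hc σ)

theorem prefixFreeWidth_lt_of_incomparable
    (hc : ∀ F : Finset (List Bool), ↑F ⊆ T → PrefixFreeB ↑F → F.card ≤ c)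
    {σ σ' τ : List Bool} (hσσ' : σ <+: σ') (hτ : τ ∈ T) (hστ : σ <+: τ)
    (hτσ' : ¬ τ <+: σ') (hσ'τ : ¬ σ' <+: τ) : prefixFreeWidth T σ' < prefixFreeWidth T σ := by
  obtain ⟨F, hFT, hF, hF', hcard⟩ := prefixFreeWidth_mem hc σ'
  have hτF : τ ∉ F := fun h => hσ'τ (hF' τ h)
  suffices (insert τ F).card ∈ prefixFreeCardsAbove T σ by
    rw [Finset.card_insert_of_notMem hτF, hcard] at this
    exact Nat.lt_of_succ_le (le_csSup (bddAbove_prefixFreeCardsAbove hc σ) this)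
  refine ⟨insert τ F, ?_, ?_, ?_, rfl⟩
  · simpa [Set.insert_subset_iff] using ⟨hτ, hFT⟩
  · simp only [Finset.coe_insert, PrefixFreeB, Set.mem_insert_iff, Finset.mem_coe]
    rintro x (rfl | hx) y (rfl | hy) hxy
    · rfl
    · exact ((List.prefix_or_prefix_of_prefix hxy (hF' y hy)).elim hτσ' hσ'τ).elim
    · exact (hσ'τ ((hF' x hx).trans hxy)).elim
    · exact hF x hx y hy hxy
  · simp only [Finset.mem_insert, forall_eq_or_imp]
    exact ⟨hστ, fun ρ hρ => hσσ'.trans (hF' ρ hρ)⟩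

end Width

theorem existsUnique_path_of_chain {T : Set (List Bool)} {σ : List Bool} (hT : IsBinTree T)
    (hσ : Extendible T σ)
    (hchain : ∀ τ₁ ∈ T, ∀ τ₂ ∈ T, σ <+: τ₁ → σ <+: τ₂ → τ₁ <+: τ₂ ∨ τ₂ <+: τ₁) :
    ∃! f : ℕ → Bool, IsPath T f ∧ ExtendsPath σ f := by
  choose τ hτT hστ hτl using hσ.2
  have hτ_unique : ∀ ρ ∈ T, σ <+: ρ → ∀ n, ρ.length = σ.length + n → ρ = τ n :=
    fun ρ hρ hσρ n hl =>
      (List.prefix_of_comparable_of_length_le (hchain ρ hρ _ (hτT n) hσρ (hστ n))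
        (by rw [hl, hτl])).eq_of_length (by rw [hl, hτl])
  have hτ_getElem : ∀ m n i (hm : i < (τ m).length) (hn : i < (τ n).length),
      (τ m)[i] = (τ n)[i] := by
    intro m n i hm hn
    rcases hchain _ (hτT m) _ (hτT n) (hστ m) (hστ n) with h | h
    · exact h.getElem hm
    · exact (h.getElem hn).symm
  set f : ℕ → Bool := fun i => (τ (i + 1)).getD i false
  have hf : ∀ n, (List.ofFn fun i : Fin (σ.length + n) => f i) = τ n := by
    intro n
    apply List.ext_getElem (by simp [hτl])
    intro i hi hi'
    have hi₁ : i < (τ (i + 1)).length := by simp [hτl]; omega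
    simp only [List.getElem_ofFn, f, List.getD_eq_getElem _ _ hi₁]
    exact hτ_getElem _ _ _ _ _
  have hpath : ∀ g : ℕ → Bool, IsPath T g → ExtendsPath σ g → ∀ n,
      (List.ofFn fun i : Fin (σ.length + n) => g i) = τ n := fun g hg hgσ n =>
    hτ_unique _ (hg _) (hgσ.prefix_ofFn (Nat.le_add_right _ n)) n (by simp)
  refine ⟨f, ⟨fun n => ?_, ?_⟩, fun g ⟨hg, hgσ⟩ => funext fun i => ?_⟩
  · exact hT _ _ ((hf n).symm ▸ List.ofFn_prefix_ofFn f (Nat.le_add_left n σ.length)) (hf n ▸ hτT n)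
  · exact ((hστ 0).eq_of_length (by simp [hτl])).trans (hf 0).symm
  · have := (hpath g hg hgσ (i + 1)).trans (hf (i + 1)).symm
    exact congrFun (List.ofFn_inj.mp this) ⟨i, by omega⟩

/-- In an infinite binary tree all of whose prefix-free subsets have at most `c` elements,
there is an extendible node `σ` such that any two elements of `T` extending `σ` are
comparable; consequently `T` has exactly one path extending `σ`. -/
theorem stmt5 (T : Set (List Bool)) (hT : IsBinTree T)
    (hinf : ∀ n : ℕ, ∃ σ ∈ T, σ.length = n) (c : ℕ)
    (hc : ∀ F : Finset (List Bool), ↑F ⊆ T → PrefixFreeB ↑F → F.card ≤ c) :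
    ∃ σ : List Bool, Extendible T σ ∧
      (∀ τ₁ ∈ T, ∀ τ₂ ∈ T, σ <+: τ₁ → σ <+: τ₂ → τ₁ <+: τ₂ ∨ τ₂ <+: τ₁) ∧
      (∃! f : ℕ → Bool, IsPath T f ∧ ExtendsPath σ f) := by
  obtain ⟨σ, hσ, hmin⟩ := (measure (prefixFreeWidth T)).wf.has_min {σ | Extendible T σ}
    ⟨[], extendible_nil hinf⟩
  have hchain : ∀ τ₁ ∈ T, ∀ τ₂ ∈ T, σ <+: τ₁ → σ <+: τ₂ → τ₁ <+: τ₂ ∨ τ₂ <+: τ₁ := by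
    intro τ₁ h₁ τ₂ h₂ hσ₁ hσ₂
    obtain ⟨σ', hσ', hσσ', hl⟩ := hσ.exists_extension hT (τ₁.length + τ₂.length + 1)
    have hshort : ∀ τ ∈ T, σ <+: τ → τ.length < σ'.length → τ <+: σ' := fun τ hτ hστ hlt =>
      by_contra fun hτσ' => hmin σ' hσ' <| prefixFreeWidth_lt_of_incomparable hc hσσ' hτ hστ hτσ'
        fun h => absurd h.length_le (by omega)
    exact List.prefix_or_prefix_of_prefix
      (hshort τ₁ h₁ hσ₁ (by omega)) (hshort τ₂ h₂ hσ₂ (by omega))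
  exact ⟨σ, hσ, hchain, existsUnique_path_of_chain hT hσ hchain⟩
end

section
/- Let T be an infinite binary tree, and let b, n ∈ ℕ be such that for every m the set T_ext^{=m} of extendible nodes of length m has at most b elements, and T_ext^{=n} has exactly b elements. Then for every extendible σ ∈ T of length n, the set of extendible nodes of T extending σ is totally ordered by the prefix relation; equivalently, T has exactly one path extending σ. -/
/-!
Counting argument: taking the length-`n` prefix maps the extendible nodes of any length `m ≥ n`
onto `T_ext^{=n}` (by König's lemma every extendible node has extendible extensions of every
length). Since level `m` has at most `b = |T_ext^{=n}|` elements, this map is injective, so two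
extendible nodes of the same length through `σ` coincide. Hence the extendible nodes through `σ`
form a chain, whose union is the unique path through `σ`.
-/

variable {T : Set (List Bool)} {σ τ : List Bool}

lemma Extendible.of_prefix (hT : IsBinTree T) (h : σ <+: τ) (hτ : Extendible T τ) :
    Extendible T σ := by
  refine ⟨hT σ τ h hτ.1, fun k => ?_⟩
  obtain ⟨ρ, hρT, hτρ, hρlen⟩ := hτ.2 (σ.length + k)
  refine ⟨ρ.take (σ.length + k), hT _ ρ (List.take_prefix _ _) hρT, ?_, ?_⟩
  · exact List.prefix_take_iff.mpr ⟨h.trans hτρ, by omega⟩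
  · simp only [List.length_take]
    have := h.length_le
    omega

lemma Extendible.exists_extendible_extension (hT : IsBinTree T) (hσ : Extendible T σ) (k : ℕ) :
    ∃ τ, Extendible T τ ∧ σ <+: τ ∧ τ.length = σ.length + k := by
  set L := σ.length + k
  choose ρ hρT hσρ hρlen using fun j => hσ.2 (k + j)
  have := (List.finite_length_eq Bool L).to_subtype
  -- pigeonhole: infinitely many of the `ρ j` share their length-`L` prefix `τ`
  obtain ⟨⟨τ, hτlen : τ.length = L⟩, hfiber⟩ := Finite.exists_infinite_fiber fun j =>
    (⟨(ρ j).take L, by simp [L, hρlen]⟩ : {l : List Bool | l.length = L})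
  have hfreq : ∀ i, ∃ j, i < j ∧ (ρ j).take L = τ := fun i => by
    obtain ⟨j, hj, hij⟩ := (Set.infinite_coe_iff.mp hfiber).exists_gt i
    exact ⟨j, hij, congrArg Subtype.val hj⟩
  obtain ⟨j₀, -, hj₀⟩ := hfreq 0
  refine ⟨τ, ⟨hj₀ ▸ hT _ _ (List.take_prefix _ _) (hρT j₀), fun i => ?_⟩, ?_, hτlen⟩
  · obtain ⟨j, hij, hj⟩ := hfreq i
    refine ⟨(ρ j).take (L + i), hT _ _ (List.take_prefix _ _) (hρT j), ?_, ?_⟩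
    · exact hj ▸ List.take_prefix_take_left (by omega)
    · simp only [List.length_take, hρlen]
      omega
  · exact hj₀ ▸ List.prefix_take_iff.mpr ⟨hσρ j₀, by omega⟩

lemma injOn_take_extLevel (hT : IsBinTree T) {n m : ℕ} (hnm : n ≤ m) {F : Finset (List Bool)}
    (hF : ↑F = extLevel T n)
    (hmax : ∀ G : Finset (List Bool), ↑G ⊆ extLevel T m → G.card ≤ F.card) :
    Set.InjOn (List.take n) (extLevel T m) := by
  classical
  have hfin : (extLevel T m).Finite := (List.finite_length_eq Bool m).subset fun τ hτ => hτ.2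
  have hsurj : F ⊆ hfin.toFinset.image (List.take n) := by
    intro α hαF
    have hα : α ∈ extLevel T n := hF ▸ hαF
    obtain ⟨τ, hτ, hατ, hτlen⟩ := hα.1.exists_extendible_extension hT (m - n)
    refine Finset.mem_image.mpr ⟨τ, hfin.mem_toFinset.mpr ⟨hτ, by rw [hτlen, hα.2]; omega⟩, ?_⟩
    rw [List.prefix_iff_eq_take.mp hατ, hα.2]
  have hcard : hfin.toFinset.card ≤ (hfin.toFinset.image (List.take n)).card :=
    (hmax _ (by simp)).trans (Finset.card_le_card hsurj)
  simpa using Finset.card_image_iff.mp (le_antisymm Finset.card_image_le hcard)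

lemma prefix_or_prefix_of_extendible (hT : IsBinTree T) {F : Finset (List Bool)}
    (hF : ↑F = extLevel T σ.length)
    (hmax : ∀ m, ∀ G : Finset (List Bool), ↑G ⊆ extLevel T m → G.card ≤ F.card)
    {τ₁ τ₂ : List Bool} (h₁ : Extendible T τ₁) (h₂ : Extendible T τ₂)
    (p₁ : σ <+: τ₁) (p₂ : σ <+: τ₂) : τ₁ <+: τ₂ ∨ τ₂ <+: τ₁ := by
  wlog hle : τ₁.length ≤ τ₂.length generalizing τ₁ τ₂
  · exact (this h₂ h₁ p₂ p₁ (by omega)).symm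
  left
  set ρ := τ₂.take τ₁.length
  have hρ : ρ ∈ extLevel T τ₁.length :=
    ⟨h₂.of_prefix hT (List.take_prefix _ _), by simp [ρ, hle]⟩
  have hσρ : σ <+: ρ := List.prefix_take_iff.mpr ⟨p₂, p₁.length_le⟩
  have : τ₁ = ρ := injOn_take_extLevel hT p₁.length_le hF (hmax _) ⟨h₁, rfl⟩ hρ <| by
    rw [← List.prefix_iff_eq_take.mp p₁, ← List.prefix_iff_eq_take.mp hσρ]
  exact this ▸ List.take_prefix _ _

section Paths

variable {f : ℕ → Bool}

lemma extendsPath_iff_getElem : ExtendsPath σ f ↔ ∀ i (hi : i < σ.length), σ[i] = f i := by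
  rw [ExtendsPath, List.ext_getElem_iff]
  simp

lemma ExtendsPath.getElem_eq (h : ExtendsPath σ f) {i : ℕ} (hi : i < σ.length) : σ[i] = f i :=
  extendsPath_iff_getElem.mp h i hi

lemma extendsPath_ofFn (f : ℕ → Bool) (L : ℕ) : ExtendsPath (List.ofFn fun i : Fin L => f i) f :=
  extendsPath_iff_getElem.mpr fun _ _ => List.getElem_ofFn _

lemma ExtendsPath.of_prefix (h : σ <+: τ) (hτ : ExtendsPath τ f) : ExtendsPath σ f :=
  extendsPath_iff_getElem.mpr fun _ hi => (h.getElem hi).trans (hτ.getElem_eq _)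

lemma ExtendsPath.prefix_of_length_le (hσ : ExtendsPath σ f) (hτ : ExtendsPath τ f)
    (hle : σ.length ≤ τ.length) : σ <+: τ := by
  refine List.prefix_iff_eq_take.mpr (List.ext_getElem (by simp [hle]) fun _ _ _ => ?_)
  rw [List.getElem_take, hσ.getElem_eq, hτ.getElem_eq]

lemma IsPath.extendible_s7 (hf : IsPath T f) (L : ℕ) : Extendible T (List.ofFn fun i : Fin L => f i) :=
  ⟨hf L, fun k => ⟨_, hf (L + k),
    (extendsPath_ofFn f L).prefix_of_length_le (extendsPath_ofFn f _) (by simp), by simp⟩⟩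

lemma exists_extendsPath_of_chain (g : ℕ → List Bool) (hchain : ∀ i j, g i <+: g j ∨ g j <+: g i)
    (hlen : ∀ k, k < (g k).length) : ∃ f : ℕ → Bool, ∀ m, ExtendsPath (g m) f :=
  ⟨fun k => (g k)[k]'(hlen k), fun m => extendsPath_iff_getElem.mpr fun i hi => by
    rcases hchain m i with h | h
    exacts [h.getElem hi, (h.getElem (hlen i)).symm]⟩

lemma IsPath.eq_of_extendible_chain
    (hchain : ∀ τ₁ τ₂ : List Bool, Extendible T τ₁ → Extendible T τ₂ →
      σ <+: τ₁ → σ <+: τ₂ → τ₁ <+: τ₂ ∨ τ₂ <+: τ₁)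
    {f₁ f₂ : ℕ → Bool} (hf₁ : IsPath T f₁) (hf₂ : IsPath T f₂)
    (hσ₁ : ExtendsPath σ f₁) (hσ₂ : ExtendsPath σ f₂) : f₁ = f₂ := by
  funext k
  set L := σ.length + k + 1
  have hσ : ∀ f, ExtendsPath σ f → σ <+: List.ofFn fun i : Fin L => f i := fun f h =>
    h.prefix_of_length_le (extendsPath_ofFn f L) (by simp [L]; omega)
  have heq : (List.ofFn fun i : Fin L => f₁ i) = List.ofFn fun i : Fin L => f₂ i := by
    rcases hchain _ _ (hf₁.extendible_s7 L) (hf₂.extendible_s7 L) (hσ f₁ hσ₁) (hσ f₂ hσ₂) with h | h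
    exacts [h.eq_of_length (by simp), (h.eq_of_length (by simp)).symm]
  simpa using congrFun (List.ofFn_injective heq) ⟨k, by omega⟩

end Paths

theorem stmt7_general (T : Set (List Bool)) (hT : IsBinTree T)
    (b n : ℕ)
    (hb : ∀ m : ℕ, ∀ F : Finset (List Bool), ↑F ⊆ extLevel T m → F.card ≤ b)
    (hn : ∃ F : Finset (List Bool), ↑F = extLevel T n ∧ F.card = b) :
    ∀ σ ∈ extLevel T n,
      (∀ τ₁ τ₂ : List Bool, Extendible T τ₁ → Extendible T τ₂ →
        σ <+: τ₁ → σ <+: τ₂ → τ₁ <+: τ₂ ∨ τ₂ <+: τ₁) ∧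
      (∃! f : ℕ → Bool, IsPath T f ∧ ExtendsPath σ f) := by
  obtain ⟨F, hF, rfl⟩ := hn
  rintro σ ⟨hσ, rfl⟩
  have chain : ∀ τ₁ τ₂ : List Bool, Extendible T τ₁ → Extendible T τ₂ →
      σ <+: τ₁ → σ <+: τ₂ → τ₁ <+: τ₂ ∨ τ₂ <+: τ₁ :=
    fun _ _ => prefix_or_prefix_of_extendible hT hF hb
  refine ⟨chain, ?_⟩
  choose g hg hσg hglen using fun k => hσ.exists_extendible_extension hT (k + 1)
  obtain ⟨f, hf⟩ := exists_extendsPath_of_chain g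
    (fun i j => chain _ _ (hg i) (hg j) (hσg i) (hσg j)) (fun k => by rw [hglen]; omega)
  have hpath : IsPath T f := fun L =>
    hT _ _ ((extendsPath_ofFn f L).prefix_of_length_le (hf L) (by simp [hglen]; omega)) (hg L).1
  have hσf : ExtendsPath σ f := (hf 0).of_prefix (hσg 0)
  exact ⟨f, ⟨hpath, hσf⟩, fun f' ⟨hpath', hσf'⟩ => hpath'.eq_of_extendible_chain chain hpath hσf' hσf⟩

/-- If every level of extendible nodes of an infinite binary tree has at most `b` elements
and level `n` has exactly `b` elements, then for every extendible `σ` of length `n` the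
extendible nodes extending `σ` are totally ordered by the prefix relation; equivalently
there is exactly one path extending `σ`. -/
theorem stmt7 (T : Set (List Bool)) (hT : IsBinTree T)
    (hinf : ∀ n : ℕ, ∃ σ ∈ T, σ.length = n) (b n : ℕ)
    (hb : ∀ m : ℕ, ∀ F : Finset (List Bool), ↑F ⊆ extLevel T m → F.card ≤ b)
    (hn : ∃ F : Finset (List Bool), ↑F = extLevel T n ∧ F.card = b) :
    ∀ σ ∈ extLevel T n,
      (∀ τ₁ τ₂ : List Bool, Extendible T τ₁ → Extendible T τ₂ →
        σ <+: τ₁ → σ <+: τ₂ → τ₁ <+: τ₂ ∨ τ₂ <+: τ₁) ∧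
      (∃! f : ℕ → Bool, IsPath T f ∧ ExtendsPath σ f) :=
  stmt7_general T hT b n hb hn
end

section
/- Let T be a computably enumerable infinite binary tree and c ∈ ℕ such that every prefix-free subset of T has at most c elements. Then T has a computable path. -/
/-!
Leaves of `T` form a prefix-free set, so there are finitely many of them and above some length
every node of `T` has a child. The levels of `T` are prefix-free as well, so their sizes are
bounded by `c`; beyond that length they are nondecreasing, hence eventually constant, and from then
on no node has two children. Above a node `σ₀` of that length, `T` is therefore a single path:
its nodes form the graph of a total function, and this graph is c.e. because `T` is. A total
function with c.e. graph is computable, by searching for a pair together with a stage at which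
it is enumerated.
-/

theorem Set.BijOn.existsUnique {α β : Type*} {f : α → β} {s : Set α} {t : Set β}
    (h : Set.BijOn f s t) {b : β} (hb : b ∈ t) : ∃! a, a ∈ s ∧ f a = b := by
  obtain ⟨a, ha, rfl⟩ := h.surjOn hb
  exact ⟨a, ⟨ha, rfl⟩, fun a' ha' => h.injOn ha'.1 ha ha'.2⟩

theorem Nat.exists_forall_ge_eq_of_monotone {f : ℕ → ℕ} (hf : Monotone f) {c : ℕ}
    (hc : ∀ n, f n ≤ c) : ∃ N, ∀ n, N ≤ n → f n = f N := by
  have hbdd : BddAbove (Set.range f) := ⟨c, by rintro _ ⟨n, rfl⟩; exact hc n⟩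
  obtain ⟨N, hN⟩ := Nat.sSup_mem (Set.range_nonempty f) hbdd
  exact ⟨N, fun n hn => le_antisymm (hN ▸ le_csSup hbdd ⟨n, rfl⟩) (hf hn)⟩

open Nat.Partrec.Code in
theorem REPred.exists_primrec₂ {α : Type*} [Primcodable α] {p : α → Prop} (hp : REPred p) :
    ∃ q : ℕ → α → Bool, Primrec₂ q ∧ ∀ a, p a ↔ ∃ s, q s a = true := by
  obtain ⟨cd, hcd⟩ := Nat.Partrec.Code.exists_code.mp hp
  refine ⟨fun s a => (evaln s cd (Encodable.encode a)).isSome,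
    Primrec.option_isSome.comp (primrec_evaln.comp
      ((Primrec.fst.pair (Primrec.const cd)).pair (Primrec.encode.comp Primrec.snd))), fun a => ?_⟩
  have heval : (eval cd (Encodable.encode a)).Dom ↔ p a := by
    simp [hcd, Encodable.encodek, Part.assert]
  simp only [← heval, Part.dom_iff_mem, evaln_complete, Option.isSome_iff_exists, Option.mem_def]
  exact exists_comm

theorem REPred.and {α : Type*} [Primcodable α] {p q : α → Prop} (hp : REPred p)
    (hq : REPred q) : REPred fun a => p a ∧ q a :=
  (hp.bind (hq.comp Computable.fst).to₂).of_eq fun a => by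
    apply Part.ext; simp [and_comm]

theorem Computable.of_rePred_graph {α β : Type*} [Primcodable α] [Primcodable β] {f : α → β}
    (hf : REPred fun x : α × β => f x.1 = x.2) : Computable f := by
  obtain ⟨q, hq, hfq⟩ := hf.exists_primrec₂
  let search (a : α) (k : ℕ) : Option β :=
    (Encodable.decode (α := ℕ × β) k).bind fun x => bif q x.1 (a, x.2) then some x.2 else none
  have hsearch : Primrec₂ search :=
    Primrec.option_bind (Primrec.decode.comp Primrec.snd)
      (Primrec.cond (hq.comp (Primrec.fst.comp Primrec.snd)
          ((Primrec.fst.comp Primrec.fst).pair (Primrec.snd.comp Primrec.snd)))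
        (Primrec.option_some.comp (Primrec.snd.comp Primrec.snd)) (Primrec.const none))
  have mem_search {a b k} :
      b ∈ search a k ↔ ∃ s, Encodable.decode k = some (s, b) ∧ q s (a, b) := by
    simp only [search, Option.mem_def, Option.bind_eq_some_iff, Prod.exists, cond_eq_ite,
      Option.ite_none_right_eq_some, Option.some.injEq]
    constructor
    · rintro ⟨s, b', hk, hq, rfl⟩; exact ⟨s, hk, hq⟩
    · rintro ⟨s, hk, hq⟩; exact ⟨s, b, hk, hq, rfl⟩
  refine (Partrec.rfindOpt hsearch.to_comp).of_eq_tot fun a => ?_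
  obtain ⟨s, hs⟩ := (hfq (a, f a)).mp rfl
  obtain ⟨b, hb⟩ := Part.dom_iff_mem.mp (Nat.rfindOpt_dom.mpr
    ⟨Encodable.encode (s, f a), f a, mem_search.mpr ⟨s, Encodable.encodek _, hs⟩⟩)
  obtain ⟨k, hk⟩ := Nat.rfindOpt_spec hb
  obtain ⟨s', -, hs'⟩ := mem_search.mp hk
  rwa [(hfq (a, b)).mpr ⟨s', hs'⟩]

theorem PrefixFreeB.mono {P Q : Set (List Bool)} (hQ : PrefixFreeB Q) (hPQ : P ⊆ Q) :
    PrefixFreeB P :=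
  fun σ hσ τ hτ => hQ σ (hPQ hσ) τ (hPQ hτ)

section PrefixFreeBounded

variable {T S : Set (List Bool)} {c : ℕ}
  (hc : ∀ F : Finset (List Bool), ↑F ⊆ T → PrefixFreeB ↑F → F.card ≤ c)
include hc

theorem PrefixFreeB.finite_of_subset (hS : PrefixFreeB S) (hST : S ⊆ T) : S.Finite := by
  by_contra hinf
  obtain ⟨F, hFS, hF⟩ := Set.Infinite.exists_subset_card_eq hinf (c + 1)
  have := hc F (hFS.trans hST) (hS.mono hFS)
  omega

theorem PrefixFreeB.ncard_le_of_subset (hS : PrefixFreeB S) (hST : S ⊆ T) : S.ncard ≤ c := by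
  have hfin := hS.finite_of_subset hc hST
  rw [Set.ncard_eq_toFinset_card _ hfin]
  exact hc _ (by simpa using hST) (by simpa using hS)

end PrefixFreeBounded

def level (T : Set (List Bool)) (n : ℕ) : Set (List Bool) := {σ | σ ∈ T ∧ σ.length = n}

def leaves (T : Set (List Bool)) : Set (List Bool) := {σ | σ ∈ T ∧ ∀ b, σ ++ [b] ∉ T}

section Tree

variable {T : Set (List Bool)} {c : ℕ}

theorem level_finite (T : Set (List Bool)) (n : ℕ) : (level T n).Finite :=
  (List.finite_length_eq Bool n).subset fun _ h => h.2

theorem prefixFreeB_level (T : Set (List Bool)) (n : ℕ) : PrefixFreeB (level T n) :=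
  fun _ hσ _ hτ h => h.eq_of_length (hσ.2.trans hτ.2.symm)

theorem IsBinTree.take_mem_level (hT : IsBinTree T) {τ : List Bool} {m n : ℕ}
    (hτ : τ ∈ level T n) (hmn : m ≤ n) : τ.take m ∈ level T m :=
  ⟨hT _ _ (List.take_prefix _ _) hτ.1, by simp [hτ.2, hmn]⟩

theorem IsBinTree.prefixFreeB_leaves (hT : IsBinTree T) : PrefixFreeB (leaves T) := by
  intro σ hσ τ hτ hστ
  by_contra hne
  obtain ⟨r, rfl⟩ := hστ
  obtain ⟨b, r, rfl⟩ := List.exists_cons_of_ne_nil (by simpa using hne)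
  exact hσ.2 b (hT _ _ ⟨r, by simp⟩ hτ.1)

theorem IsBinTree.exists_forall_length_ge_child (hT : IsBinTree T)
    (hc : ∀ F : Finset (List Bool), ↑F ⊆ T → PrefixFreeB ↑F → F.card ≤ c) :
    ∃ B, ∀ σ ∈ T, B ≤ σ.length → ∃ b, σ ++ [b] ∈ T := by
  obtain ⟨B, hB⟩ := ((hT.prefixFreeB_leaves.finite_of_subset hc fun _ h => h.1).image
    List.length).bddAbove
  refine ⟨B + 1, fun σ hσ hlen => ?_⟩
  by_contra! hleaf
  have := hB ⟨σ, ⟨hσ, hleaf⟩, rfl⟩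
  omega

theorem IsBinTree.mapsTo_dropLast_level (hT : IsBinTree T) (n : ℕ) :
    Set.MapsTo List.dropLast (level T (n + 1)) (level T n) := fun τ hτ =>
  ⟨hT _ _ (List.dropLast_prefix τ) hτ.1, by simp [hτ.2]⟩

theorem surjOn_dropLast_level {n : ℕ} (hchild : ∀ σ ∈ level T n, ∃ b, σ ++ [b] ∈ T) :
    Set.SurjOn List.dropLast (level T (n + 1)) (level T n) := fun σ hσ => by
  obtain ⟨b, hb⟩ := hchild σ hσ
  exact ⟨σ ++ [b], ⟨hb, by simp [hσ.2]⟩, List.dropLast_concat⟩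

theorem IsBinTree.ncard_level_le_succ (hT : IsBinTree T) {n : ℕ}
    (hchild : ∀ σ ∈ level T n, ∃ b, σ ++ [b] ∈ T) :
    (level T n).ncard ≤ (level T (n + 1)).ncard := by
  rw [← (surjOn_dropLast_level hchild).image_eq_of_mapsTo (hT.mapsTo_dropLast_level n)]
  exact Set.ncard_image_le (level_finite T _)

/-- Once the levels stop growing, no node has two children. -/
theorem IsBinTree.bijOn_dropLast_level (hT : IsBinTree T) {n : ℕ}
    (hchild : ∀ σ ∈ level T n, ∃ b, σ ++ [b] ∈ T)
    (hcard : (level T (n + 1)).ncard ≤ (level T n).ncard) :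
    Set.BijOn List.dropLast (level T (n + 1)) (level T n) := by
  have himage := (surjOn_dropLast_level hchild).image_eq_of_mapsTo (hT.mapsTo_dropLast_level n)
  refine ⟨hT.mapsTo_dropLast_level n, Set.injOn_of_ncard_image_eq ?_ (level_finite T _),
    surjOn_dropLast_level hchild⟩
  rw [himage]
  exact le_antisymm (himage ▸ Set.ncard_image_le (level_finite T _)) hcard

theorem IsBinTree.exists_bijOn_take_level (hT : IsBinTree T)
    (hc : ∀ F : Finset (List Bool), ↑F ⊆ T → PrefixFreeB ↑F → F.card ≤ c) :
    ∃ N, ∀ k, Set.BijOn (List.take N) (level T (N + k)) (level T N) := by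
  obtain ⟨B, hB⟩ := hT.exists_forall_length_ge_child hc
  have hchild : ∀ n, B ≤ n → ∀ σ ∈ level T n, ∃ b, σ ++ [b] ∈ T :=
    fun n hn σ hσ => hB σ hσ.1 (hσ.2 ▸ hn)
  obtain ⟨K, hK⟩ := Nat.exists_forall_ge_eq_of_monotone (f := fun k => (level T (B + k)).ncard)
    (monotone_nat_of_le_succ fun k => hT.ncard_level_le_succ (hchild _ (by omega)))
    fun k => (prefixFreeB_level T _).ncard_le_of_subset hc fun _ h => h.1
  refine ⟨B + K, fun k => ?_⟩
  induction k with
  | zero => exact (Set.bijOn_id _).congr fun τ hτ => (List.take_of_length_le hτ.2.le).symm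
  | succ k ih =>
    have hcard : (level T (B + K + k + 1)).ncard ≤ (level T (B + K + k)).ncard := by
      have h₁ := hK (K + k + 1) (by omega)
      have h₂ := hK (K + k) (by omega)
      simp only [← add_assoc] at h₁ h₂
      omega
    refine (ih.comp (hT.bijOn_dropLast_level (hchild _ (by omega)) hcard)).congr fun τ hτ => ?_
    simp [List.dropLast_eq_take, List.take_take, hτ.2]

end Tree

theorem IsBinTree.isPath_of_prefix_chain {T : Set (List Bool)} (hT : IsBinTree T)
    {g : ℕ → List Bool} (hgT : ∀ n, g n ∈ T) (hg : ∀ m n, m ≤ n → g m <+: g n)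
    (hlen : ∀ n, n ≤ (g n).length) : IsPath T fun i => (g (i + 1)).getD i false := by
  intro n
  suffices h : (List.ofFn fun i : Fin n => (g (i + 1)).getD i false) = (g n).take n by
    exact h ▸ hT _ _ (List.take_prefix _ _) (hgT n)
  refine List.ext_getElem (by simpa using hlen n) fun i hi _ => ?_
  have hi' : i < (g (i + 1)).length := Nat.lt_of_lt_of_le i.lt_succ_self (hlen _)
  simp only [List.getElem_ofFn, List.getElem_take, List.getD_eq_getElem _ _ hi']
  exact (hg _ _ (by simpa using hi)).getElem hi'

/-- A c.e. infinite binary tree all of whose prefix-free subsets have at most `c` elements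
has a computable path. -/
theorem stmt9 (T : Set (List Bool)) (hT : IsBinTree T) (hce : REPred (· ∈ T))
    (hinf : ∀ n : ℕ, ∃ σ ∈ T, σ.length = n) (c : ℕ)
    (hc : ∀ F : Finset (List Bool), ↑F ⊆ T → PrefixFreeB ↑F → F.card ≤ c) :
    ∃ f : ℕ → Bool, Computable f ∧ IsPath T f := by
  obtain ⟨N, hN⟩ := hT.exists_bijOn_take_level hc
  obtain ⟨σ₀, hσ₀⟩ := hinf N
  choose g hg hg_unique using fun n => (hN n).existsUnique (b := σ₀) hσ₀
  have hg_graph : ∀ n τ, g n = τ ↔ (τ ∈ T ∧ τ.length = N + n ∧ τ.take N = σ₀) := fun n τ =>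
    ⟨by rintro rfl; exact ⟨(hg n).1.1, (hg n).1.2, (hg n).2⟩,
      fun h => (hg_unique n τ ⟨⟨h.1, h.2.1⟩, h.2.2⟩).symm⟩
  have hgraph_re : REPred fun x : ℕ × List Bool => x.2 ∈ T ∧ x.2.length = N + x.1 ∧ x.2.take N = σ₀ :=
    REPred.and (hce.comp Computable.snd) <| ComputablePred.to_re <| PrimrecPred.computablePred <|
      (Primrec.eq.comp (Primrec.list_length.comp Primrec.snd)
        (Primrec.nat_add.comp (Primrec.const N) Primrec.fst)).and
      (Primrec.eq.comp (Primrec.list_take.comp (Primrec.const N) Primrec.snd) (Primrec.const σ₀))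
  have hg_comp : Computable g :=
    Computable.of_rePred_graph (hgraph_re.of_eq fun x => (hg_graph x.1 x.2).symm)
  have hg_chain : ∀ m n, m ≤ n → g m <+: g n := fun m n hmn =>
    (hg_unique m _ ⟨hT.take_mem_level (hg n).1 (by omega), by simp [List.take_take, (hg n).2]⟩) ▸
      List.take_prefix _ _
  exact ⟨_, (Primrec.list_getD false).to_comp.comp (hg_comp.comp Computable.succ) Computable.id,
    hT.isPath_of_prefix_chain (fun n => (hg n).1.1) hg_chain fun n => by simp [(hg n).1.2]⟩
end

section
/- Let (σ_i)_{i∈ℕ} be a computable sequence of binary strings whose range T = {σ_i : i ∈ ℕ} is a binary tree containing strings of every length. Define T̂ to be the set of strings τ over ℕ such that for all i ≤ j < length τ, σ_{τ(i)} has length i and σ_{τ(i)} is a prefix of σ_{τ(j)}. Then T̂ is a computable infinite tree of strings over ℕ, and for every path g of T̂ the function f : ℕ → Bool defined by f(n) = σ_{g(n+1)}(n) is a path of T; moreover, if g is computable then f is computable. -/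
/-- The tree `T̂` of strings over ℕ coding chains of strings from the enumerated tree
`T = {σ i : i ∈ ℕ}`: `τ ∈ T̂` iff for all `i ≤ j <` length of `τ`, `σ (τ i)` has length `i`
and is a prefix of `σ (τ j)`. -/
def hatTree (σ : ℕ → List Bool) : Set (List ℕ) :=
  {τ : List ℕ | ∀ i j : ℕ, i ≤ j → j < τ.length →
    (σ (τ.getD i 0)).length = i ∧ σ (τ.getD i 0) <+: σ (τ.getD j 0)}

/-!
Membership of `τ` in `T̂` depends only on the list `τ.map σ` of the strings it codes, and on lists
of strings the defining condition is primitive recursive; so `T̂` many-one reduces to a decidable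
set. The prefixes of a node of `T` of length `n` lie in `T` and their indices form a node of `T̂`
of length `n`. Along a path `g` of `T̂`, `σ (g n)` has length `n` and extends every `σ (g k)` with
`k ≤ n`, so it is the initial segment of length `n` of `f`.
-/

theorem Computable.list_map {α β : Type*} [Primcodable α] [Primcodable β] {f : α → β}
    (hf : Computable f) : Computable (List.map f) := by
  let F : List α → ℕ → List β := fun l n => Nat.rec [] (fun k acc => acc ++ (l[k]?.map f).toList) n
  have step : Computable₂ fun (l : List α) (p : ℕ × List β) => p.2 ++ (l[p.1]?.map f).toList := by
    refine (Computable.option_casesOn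
      (Computable.list_getElem?.comp Computable.fst (Computable.fst.comp Computable.snd))
      (Computable.snd.comp Computable.snd)
      (Computable.list_concat.comp (Computable.snd.comp (Computable.snd.comp Computable.fst))
        (hf.comp Computable.snd)).to₂).to₂.of_eq ?_
    rintro ⟨l, k, acc⟩
    dsimp only
    cases l[k]? <;> simp
  have hF : Computable fun l => F l l.length :=
    Computable.nat_rec Computable.list_length (Computable.const []) step
  have take_eq : ∀ l n, F l n = (l.take n).map f := by
    intro l n
    induction n with
    | zero => simp [F]
    | succ n ih =>
      simp only [F] at ih ⊢
      rw [ih, List.take_add_one, List.map_append]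
      cases l[n]? <;> rfl
  exact hF.of_eq fun l => by rw [take_eq, List.take_length]

section LevelChain

variable {α : Type*}

def IsLevelChain (L : List (List α)) : Prop :=
  ∀ i j, i ≤ j → j < L.length → (L.getD i []).length = i ∧ L.getD i [] <+: L.getD j []

variable [Primcodable α]

open Primrec in
theorem primrecRel_isPrefix : PrimrecRel (@List.IsPrefix α) :=
  PrimrecRel.of_eq (r := fun a b : List α => b.take a.length = a)
    (Primrec.eq.comp (list_take.comp (list_length.comp fst) snd) fst)
    fun _ _ => (List.prefix_iff_eq_take.trans eq_comm).symm

open Primrec in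
theorem primrecPred_isLevelChain : PrimrecPred (@IsLevelChain α) := by
  have hget : Primrec₂ fun (L : List (List α)) i => L.getD i [] := list_getD []
  have hstep : PrimrecRel fun (i : ℕ) (p : List (List α) × ℕ) =>
      (p.1.getD i []).length = i ∧ p.1.getD i [] <+: p.1.getD p.2 [] :=
    PrimrecPred.and
      (Primrec.eq.comp (list_length.comp (hget.comp (fst.comp snd) fst)) fst)
      (primrecRel_isPrefix.comp (hget.comp (fst.comp snd) fst)
        (hget.comp (fst.comp snd) (snd.comp snd)))
  have hswap : Primrec fun p : ℕ × List (List α) => (p.2, p.1) := pair snd fst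
  have hbelow : PrimrecRel fun (j : ℕ) (L : List (List α)) =>
      ∀ i ∈ List.range (j + 1), (L.getD i []).length = i ∧ L.getD i [] <+: L.getD j [] :=
    hstep.forall_mem_list.comp (list_range.comp (succ.comp fst)) hswap
  refine ((PrimrecRel.forall_mem_list hbelow).comp (list_range.comp list_length) Primrec.id).of_eq
    fun L => ?_
  simp only [List.mem_range]
  exact ⟨fun h i j hij hj => h j hj i (Nat.lt_succ_of_le hij),
    fun h j hj i hi => h i j (Nat.le_of_lt_succ hi) hj⟩

end LevelChain

theorem Set.infinite_of_forall_exists_length_eq {α : Type*} {S : Set (List α)}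
    (h : ∀ n, ∃ l ∈ S, l.length = n) : S.Infinite :=
  Set.Infinite.of_image List.length <| Set.infinite_univ.mono fun n _ => h n

section HatTree

variable {σ : ℕ → List Bool}

theorem mem_hatTree_iff_isLevelChain {τ : List ℕ} :
    τ ∈ hatTree σ ↔ IsLevelChain (τ.map σ) := by
  have getD_map : ∀ j < τ.length, (τ.map σ).getD j [] = σ (τ.getD j 0) := fun j hj => by
    rw [List.getD_eq_getElem _ _ (by simpa using hj), List.getElem_map,
      List.getD_eq_getElem _ _ hj]
  simp only [hatTree, IsLevelChain, Set.mem_ofPred_eq, List.length_map]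
  refine forall₄_congr fun i j hij hj => ?_
  rw [getD_map i (hij.trans_lt hj), getD_map j hj]

theorem computablePred_mem_hatTree (hσ : Computable σ) : ComputablePred (· ∈ hatTree σ) :=
  ComputablePred.computable_of_manyOneReducible
    ⟨List.map σ, Computable.list_map hσ, fun _ => mem_hatTree_iff_isLevelChain⟩
    primrecPred_isLevelChain.computablePred

theorem isTreeN_hatTree : IsTreeN (hatTree σ) := by
  intro τ₁ τ₂ hpre hmem i j hij hj
  have getD_eq : ∀ k < τ₁.length, τ₁.getD k 0 = τ₂.getD k 0 := fun k hk => by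
    rw [List.getD_eq_getElem _ _ hk, List.getD_eq_getElem _ _ (hk.trans_le hpre.length_le),
      hpre.getElem hk]
  rw [getD_eq i (hij.trans_lt hj), getD_eq j hj]
  exact hmem i j hij (hj.trans_le hpre.length_le)

theorem exists_mem_hatTree_length_eq (hT : IsBinTree (Set.range σ)) (s : ℕ) :
    ∃ τ ∈ hatTree σ, τ.length = (σ s).length := by
  have : ∀ k, ∃ m, σ m = (σ s).take k := fun k => hT _ _ (List.take_prefix _ _) ⟨s, rfl⟩
  choose idx hidx using this
  refine ⟨(List.range (σ s).length).map idx, fun i j hij hj => ?_, by simp⟩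
  rw [List.length_map, List.length_range] at hj
  simp only [List.getD_eq_getElem?_getD, List.getElem?_map, List.getElem?_range (hij.trans_lt hj),
    List.getElem?_range hj, Option.map_some, Option.getD_some, hidx]
  exact ⟨by rw [List.length_take]; omega, List.take_prefix_take_left hij⟩

theorem hatTree_infinite (hT : IsBinTree (Set.range σ)) (hinf : ∀ n, ∃ i, (σ i).length = n) :
    (hatTree σ).Infinite :=
  Set.infinite_of_forall_exists_length_eq fun n => by
    obtain ⟨s, rfl⟩ := hinf n
    exact exists_mem_hatTree_length_eq hT s

end HatTree

namespace IsPathN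

variable {σ : ℕ → List Bool} {g : ℕ → ℕ}

theorem hatTree_chain (hg : IsPathN (hatTree σ) g) {i j : ℕ} (hij : i ≤ j) :
    (σ (g i)).length = i ∧ σ (g i) <+: σ (g j) := by
  have getD_ofFn : ∀ k ≤ j, (List.ofFn fun k : Fin (j + 1) => g k).getD k 0 = g k := fun k hk => by
    rw [List.getD_eq_getElem _ _ (by rw [List.length_ofFn]; omega), List.getElem_ofFn]
  simpa only [getD_ofFn i hij, getD_ofFn j le_rfl] using hg (j + 1) i j hij (by simp)

theorem hatTree_eq_ofFn (hg : IsPathN (hatTree σ) g) (n : ℕ) :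
    σ (g n) = List.ofFn fun k : Fin n => (σ (g (k + 1))).getD k false := by
  have hlen : (σ (g n)).length = n := (hg.hatTree_chain le_rfl).1
  refine List.ext_getElem (by simp [hlen]) fun k hk _ => ?_
  obtain ⟨hlen_succ, hpre⟩ := hg.hatTree_chain (i := k + 1) (j := n) (by omega)
  rw [List.getElem_ofFn, Fin.val_mk, List.getD_eq_getElem _ _ (by omega), hpre.getElem]

theorem isPath_of_hatTree (hg : IsPathN (hatTree σ) g) :
    IsPath (Set.range σ) fun n => (σ (g (n + 1))).getD n false :=
  fun n => ⟨g n, hg.hatTree_eq_ofFn n⟩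

end IsPathN

/-- If `σ` is a computable sequence of binary strings whose range is a binary tree with
strings of every length, then the associated tree `T̂` over ℕ is a computable infinite
tree, every path `g` of `T̂` yields the path `n ↦ σ (g (n+1)) (n)` of the range of `σ`,
and this path is computable whenever `g` is. -/
theorem stmt13 (σ : ℕ → List Bool) (hσ : Computable σ)
    (hT : IsBinTree (Set.range σ)) (hinf : ∀ n : ℕ, ∃ i : ℕ, (σ i).length = n) :
    IsTreeN (hatTree σ) ∧ ComputablePred (· ∈ hatTree σ) ∧ (hatTree σ).Infinite ∧
    ∀ g : ℕ → ℕ, IsPathN (hatTree σ) g →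
      IsPath (Set.range σ) (fun n => (σ (g (n + 1))).getD n false) ∧
      (Computable g → Computable fun n => (σ (g (n + 1))).getD n false) :=
  ⟨isTreeN_hatTree, computablePred_mem_hatTree hσ, hatTree_infinite hT hinf,
    fun _ hg => ⟨hg.isPath_of_hatTree, fun hgc =>
      (Primrec.list_getD false).to_comp.comp (hσ.comp (hgc.comp Computable.succ)) Computable.id⟩⟩
end
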